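/- Assume 0 < π0 < 1 and π1, π2, π3 > 0. The system admits no nonconstant periodic orbits in Ω: if L = (L1, L2) : ℝ → ℝ² is a differentiable solution of the system L1' = F1(L1,L2), L2' = F2(L1,L2) with L(t) ∈ Ω for all t, and L is periodic with some period T > 0, then L is constant, with L(t) = (L_ss, L_ss) for all t. -/

import Mathlib

/-!
Both `(L1 - L2)²` and `(L1 - L_ss)²` are Lyapunov functions, and a periodic function with
nonpositive derivative is constant, so these derivatives vanish identically. Along the flow
`(L1 - L2)' = -π1 J (L1 - L2)`, which forces `L1 = L2`. On the diagonal `F1(x, x) / J(x, x)` is a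
downward quadratic in `x` with roots `L_ss` and a negative one, so `L1' = -c (L1 - L_ss)` with
`c > 0`, which forces `L1 = L_ss`.
-/

noncomputable section

/-- The flux `J(L1, L2)`. -/
def J (π2 π3 L1 L2 : ℝ) : ℝ :=
  1 / (1 + π2 * (L1 + L2) + π3 * (L1 ^ 2 + L2 ^ 2))

/-- The first component of the vector field. -/
def F1 (π0 π1 π2 π3 L1 L2 : ℝ) : ℝ :=
  J π2 π3 L1 L2 * (1 - L1 - L2) - π0 - π1 * J π2 π3 L1 L2 * L1

/-- The second component of the vector field. -/
def F2 (π0 π1 π2 π3 L1 L2 : ℝ) : ℝ :=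
  J π2 π3 L1 L2 * (1 - L1 - L2) - π0 - π1 * J π2 π3 L1 L2 * L2

/-- The domain `Ω`. -/
def Omega : Set (ℝ × ℝ) := {p | 0 ≤ p.1 ∧ 0 ≤ p.2 ∧ p.1 + p.2 ≤ 1}

/-- Steady-state length `L_ss`. -/
def Lss (π0 π1 π2 π3 : ℝ) : ℝ :=
  ((1 + π0 * π2 + π1 / 2) / (2 * π0 * π3)) *
    (Real.sqrt (1 + 2 * (1 - π0) * π0 * π3 / (1 + π0 * π2 + π1 / 2) ^ 2) - 1)

open Function

theorem Antitone.eq_of_periodic {G α : Type*} [AddCommGroup G] [LinearOrder G]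
    [IsOrderedAddMonoid G] [Archimedean G] [PartialOrder α] {f : G → α} {T : G}
    (hf : Antitone f) (hp : Periodic f T) (hT : 0 < T) (a b : G) : f a = f b := by
  wlog hab : a ≤ b generalizing a b
  · exact (this b a (le_of_not_ge hab)).symm
  obtain ⟨n, hn⟩ := Archimedean.arch (b - a) hT
  refine le_antisymm ?_ (hf hab)
  calc f a = f (a + n • T) := ((hp.nsmul n) a).symm
    _ ≤ f b := hf (by rwa [← sub_le_iff_le_add'])

theorem Function.Periodic.hasDerivAt_eq_zero_of_nonpos {f f' : ℝ → ℝ} {T : ℝ}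
    (hp : Periodic f T) (hT : 0 < T) (hd : ∀ t, HasDerivAt f (f' t) t)
    (hf' : ∀ t, f' t ≤ 0) (t : ℝ) : f' t = 0 := by
  have hanti : Antitone f :=
    antitone_of_deriv_nonpos (fun t => (hd t).differentiableAt)
      (fun t => (hd t).deriv ▸ hf' t)
  have hconst : f = fun _ => f 0 := funext fun s => hanti.eq_of_periodic hp hT s 0
  exact (hd t).unique (hconst ▸ hasDerivAt_const t (f 0))

theorem Function.Periodic.eq_zero_of_hasDerivAt_neg_mul {u c : ℝ → ℝ} {T : ℝ}
    (hp : Periodic u T) (hT : 0 < T) (hd : ∀ t, HasDerivAt u (-(c t * u t)) t)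
    (hc : ∀ t, 0 < c t) (t : ℝ) : u t = 0 := by
  have hsq : ∀ t, HasDerivAt (fun s => u s ^ 2) (-(2 * c t * u t ^ 2)) t := fun t =>
    ((hd t).pow 2).congr_deriv (by ring)
  have hzero := (hp.comp (· ^ 2)).hasDerivAt_eq_zero_of_nonpos hT hsq
    (fun t => by have := hc t; rw [neg_nonpos]; positivity) t
  have : 2 * c t ≠ 0 := by have := hc t; positivity
  simpa [this] using hzero

section Model

variable {π0 π1 π2 π3 : ℝ}

theorem J_pos (hπ2 : 0 ≤ π2) (hπ3 : 0 ≤ π3) {x y : ℝ} (hx : 0 ≤ x) (hy : 0 ≤ y) :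
    0 < J π2 π3 x y := by
  unfold J
  positivity

theorem F1_sub_F2 (x y : ℝ) :
    F1 π0 π1 π2 π3 x y - F2 π0 π1 π2 π3 x y = -(π1 * J π2 π3 x y * (x - y)) := by
  unfold F1 F2
  ring

theorem mul_Lss (hπ0 : π0 ≠ 0) (hπ3 : π3 ≠ 0) (ha : 0 < 1 + π0 * π2 + π1 / 2) :
    2 * π0 * π3 * Lss π0 π1 π2 π3 =
      √((1 + π0 * π2 + π1 / 2) ^ 2 + 2 * (1 - π0) * π0 * π3) - (1 + π0 * π2 + π1 / 2) := by
  unfold Lss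
  generalize 1 + π0 * π2 + π1 / 2 = a at ha ⊢
  have harg : 1 + 2 * (1 - π0) * π0 * π3 / a ^ 2 = (a ^ 2 + 2 * (1 - π0) * π0 * π3) / a ^ 2 := by
    field_simp
  rw [harg, Real.sqrt_div' _ (sq_nonneg a), Real.sqrt_sq ha.le]
  generalize √(a ^ 2 + 2 * (1 - π0) * π0 * π3) = s
  field_simp

theorem mul_Lss_add_pos (hπ0 : π0 ≠ 0) (hπ3 : π3 ≠ 0) (ha : 0 < 1 + π0 * π2 + π1 / 2) :
    0 < 2 * π0 * π3 * Lss π0 π1 π2 π3 + (2 + π1 + 2 * π0 * π2) := by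
  rw [mul_Lss hπ0 hπ3 ha]
  nlinarith [Real.sqrt_nonneg ((1 + π0 * π2 + π1 / 2) ^ 2 + 2 * (1 - π0) * π0 * π3)]

theorem Lss_quadratic (hπ0 : 0 < π0) (hπ0' : π0 ≤ 1) (hπ1 : 0 ≤ π1) (hπ2 : 0 ≤ π2)
    (hπ3 : 0 < π3) :
    2 * π0 * π3 * Lss π0 π1 π2 π3 ^ 2 + (2 + π1 + 2 * π0 * π2) * Lss π0 π1 π2 π3 = 1 - π0 := by
  have ha : 0 < 1 + π0 * π2 + π1 / 2 := by positivity
  have hdisc : 0 ≤ (1 + π0 * π2 + π1 / 2) ^ 2 + 2 * (1 - π0) * π0 * π3 := by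
    have : 0 ≤ 1 - π0 := by linarith
    positivity
  have hc : 2 * π0 * π3 ≠ 0 := by positivity
  apply mul_left_cancel₀ hc
  -- square `2 π0 π3 Lss + a = √(a² + 2 (1 - π0) π0 π3)`
  linear_combination (2 * π0 * π3 * Lss π0 π1 π2 π3 + (1 + π0 * π2 + π1 / 2) +
    √((1 + π0 * π2 + π1 / 2) ^ 2 + 2 * (1 - π0) * π0 * π3)) * mul_Lss hπ0.ne' hπ3.ne' ha +
    Real.sq_sqrt hdisc

/-- `F1 (x, x) / J (x, x) = 1 - π0 - (2 + π1 + 2 π0 π2) x - 2 π0 π3 x²`, factored through a root. -/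
theorem F1_self_eq_of_root {r : ℝ}
    (hr : 2 * π0 * π3 * r ^ 2 + (2 + π1 + 2 * π0 * π2) * r = 1 - π0) {x : ℝ}
    (hJ : J π2 π3 x x ≠ 0) :
    F1 π0 π1 π2 π3 x x =
      -(J π2 π3 x x * (2 * π0 * π3 * (x + r) + (2 + π1 + 2 * π0 * π2)) * (x - r)) := by
  have hJD : J π2 π3 x x * (1 + π2 * (x + x) + π3 * (x ^ 2 + x ^ 2)) = 1 :=
    one_div_mul_cancel fun hD => hJ (by rw [J, hD, div_zero])
  unfold F1
  linear_combination π0 * hJD - J π2 π3 x x * hr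

end Model

/-- the system admits no nonconstant periodic orbits in `Ω`: any
periodic solution staying in `Ω` is the constant solution `(L_ss, L_ss)`. -/
theorem no_periodic_orbits (π0 π1 π2 π3 T : ℝ)
    (hπ0 : 0 < π0) (hπ0' : π0 < 1) (hπ1 : 0 < π1) (hπ2 : 0 < π2) (hπ3 : 0 < π3)
    (hT : 0 < T)
    (L1 L2 : ℝ → ℝ)
    (hd1 : ∀ t : ℝ, HasDerivAt L1 (F1 π0 π1 π2 π3 (L1 t) (L2 t)) t)
    (hd2 : ∀ t : ℝ, HasDerivAt L2 (F2 π0 π1 π2 π3 (L1 t) (L2 t)) t)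
    (hΩ : ∀ t : ℝ, (L1 t, L2 t) ∈ Omega)
    (hper : ∀ t : ℝ, L1 (t + T) = L1 t ∧ L2 (t + T) = L2 t) :
    ∀ t : ℝ, L1 t = Lss π0 π1 π2 π3 ∧ L2 t = Lss π0 π1 π2 π3 := by
  have hJ : ∀ t, 0 < J π2 π3 (L1 t) (L1 t) := fun t => J_pos hπ2.le hπ3.le (hΩ t).1 (hΩ t).1
  have hdiag : ∀ t, L1 t = L2 t := fun t => sub_eq_zero.1 <|
    Periodic.eq_zero_of_hasDerivAt_neg_mul (u := fun t => L1 t - L2 t)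
      (fun t => by simp only [(hper t).1, (hper t).2]) hT
      (fun t => F1_sub_F2 (L1 t) (L2 t) ▸ (hd1 t).sub (hd2 t))
      (fun t => mul_pos hπ1 (J_pos hπ2.le hπ3.le (hΩ t).1 (hΩ t).2.1)) t
  have ha : 0 < 1 + π0 * π2 + π1 / 2 := by positivity
  have hss : ∀ t, L1 t = Lss π0 π1 π2 π3 := fun t => sub_eq_zero.1 <|
    Periodic.eq_zero_of_hasDerivAt_neg_mul (u := fun t => L1 t - Lss π0 π1 π2 π3)
      (fun t => by simp only [(hper t).1]) hT
      (fun t => by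
        have h := (hd1 t).sub_const (Lss π0 π1 π2 π3)
        rwa [← hdiag t, F1_self_eq_of_root (Lss_quadratic hπ0 hπ0'.le hπ1.le hπ2.le hπ3)
          (hJ t).ne'] at h)
      (fun t => mul_pos (hJ t) (by
        nlinarith [mul_Lss_add_pos hπ0.ne' hπ3.ne' ha, (hΩ t).1, mul_pos hπ0 hπ3])) t
  exact fun t => ⟨hss t, hdiag t ▸ hss t⟩
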